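/- Fix j and δ ∈ [1/2, 1]. For each label i ≠ ℓ_j (where ℓ_j attains α_j = x(v_j, ℓ_j) = max_i x(v_j,i)): Σ_{i ≠ ℓ_j} ∫_0^δ ( f(A_j(i,θ)) − f(A_{j−1}(i,θ)) ) dθ ≥ f(V_j) − f(V_{j−1}) + α_j (f(V_{j−1}) − f(V_j)), where A_j(i,θ) = A(i,θ) ∩ V_j. -/

import Mathlib

/-!
Let `w = v_j` and `c = f(V_j) - f(V_{j-1})`. For a label `i`, the sets `A_j(i,θ)` and
`A_{j-1}(i,θ)` differ only by `w`, which is present exactly when `θ ≤ x(w,i)`; since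
`A_{j-1}(i,θ) ⊆ V_{j-1}`, submodularity (diminishing returns) bounds the integrand below by
`c` for `θ ≤ x(w,i)`, and it vanishes otherwise. For `i ≠ ℓ_j` we have `x(w,i) ≤ 1/2 ≤ δ`,
so the `i`-th integral is at least `c · x(w,i)`, and summing over `i ≠ ℓ_j` gives `c (1 - α_j)`.
-/

open MeasureTheory Set Finset

section Submodular

variable {α : Type*} {f : Set α → ℝ}

lemma marginal_insert_antitone (hsub : ∀ A B : Set α, f A + f B ≥ f (A ∩ B) + f (A ∪ B))
    {S T : Set α} {w : α} (hST : S ⊆ T) (hwT : w ∉ T) :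
    f (insert w T) - f T ≤ f (insert w S) - f S := by
  have h := hsub (insert w S) T
  rw [insert_inter_of_notMem hwT, inter_eq_left.2 hST, insert_union, union_eq_right.2 hST] at h
  linarith

lemma indicator_le_marginal_inter_setOf_le
    (hsub : ∀ A B : Set α, f A + f B ≥ f (A ∩ B) + f (A ∪ B))
    {S : Set α} {w : α} (hwS : w ∉ S) (y : α → ℝ) (θ : ℝ) :
    {θ | θ ≤ y w}.indicator (fun _ ↦ f (insert w S) - f S) θ ≤
      f (insert w S ∩ {v | θ ≤ y v}) - f (S ∩ {v | θ ≤ y v}) := by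
  by_cases hθ : θ ≤ y w
  · rw [indicator_of_mem (show θ ∈ {θ | θ ≤ y w} from hθ),
      insert_inter_of_mem (t := {v | θ ≤ y v}) hθ]
    exact marginal_insert_antitone hsub inter_subset_left hwS
  · rw [indicator_of_notMem (show θ ∉ {θ | θ ≤ y w} from hθ),
      insert_inter_of_notMem (t := {v | θ ≤ y v}) hθ, sub_self]

end Submodular

lemma measurable_inter_setOf_le {α : Type*} (T : Set α) (y : α → ℝ) :
    Measurable fun θ : ℝ ↦ T ∩ {v | θ ≤ y v} :=
  measurable_set_iff.2 fun a ↦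
    measurable_const.and (measurableSet_setOfPred.1 (measurableSet_Iic (a := y a)))

lemma intervalIntegrable_comp_of_finite {β : Type*} [MeasurableSpace β]
    [DiscreteMeasurableSpace β] [Finite β] (F : β → ℝ) {g : ℝ → β} (hg : Measurable g)
    {μ : Measure ℝ} [IsLocallyFiniteMeasure μ] (a b : ℝ) :
    IntervalIntegrable (fun θ ↦ F (g θ)) μ a b := by
  obtain ⟨M, hM⟩ := (Set.finite_range fun b ↦ ‖F b‖).bddAbove
  rw [intervalIntegrable_iff]
  exact Measure.integrableOn_of_bounded measure_Ioc_lt_top.ne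
    (Measurable.of_discrete.comp hg).aestronglyMeasurable
    (ae_of_all _ fun θ ↦ hM (mem_range_self (g θ)))

lemma mul_le_integral_marginal_inter_setOf_le {α : Type*} [Finite α] {f : Set α → ℝ}
    (hsub : ∀ A B : Set α, f A + f B ≥ f (A ∩ B) + f (A ∪ B))
    {S : Set α} {w : α} (hwS : w ∉ S) (y : α → ℝ) {δ : ℝ} (hw0 : 0 ≤ y w) (hwδ : y w ≤ δ) :
    (f (insert w S) - f S) * y w ≤
      ∫ θ in (0 : ℝ)..δ, (f (insert w S ∩ {v | θ ≤ y v}) - f (S ∩ {v | θ ≤ y v})) := by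
  set c := f (insert w S) - f S
  have hind : IntervalIntegrable ({θ | θ ≤ y w}.indicator fun _ ↦ c) volume 0 δ := by
    rw [intervalIntegrable_iff]
    exact (integrableOn_const measure_Ioc_lt_top.ne).indicator measurableSet_Iic
  have hmarg : IntervalIntegrable
      (fun θ ↦ f (insert w S ∩ {v | θ ≤ y v}) - f (S ∩ {v | θ ≤ y v})) volume 0 δ :=
    (intervalIntegrable_comp_of_finite f (measurable_inter_setOf_le _ y) 0 δ).sub
      (intervalIntegrable_comp_of_finite f (measurable_inter_setOf_le _ y) 0 δ)
  calc c * y w = ∫ θ in (0 : ℝ)..δ, {θ | θ ≤ y w}.indicator (fun _ ↦ c) θ := by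
        rw [intervalIntegral.integral_indicator ⟨hw0, hwδ⟩, intervalIntegral.integral_const,
          sub_zero, smul_eq_mul, mul_comm]
    _ ≤ _ := intervalIntegral.integral_mono_on (hw0.trans hwδ) hind hmarg
        fun θ _ ↦ indicator_le_marginal_inter_setOf_le hsub hwS y θ

lemma le_half_of_le_of_sum_eq_one {ι : Type*} [Fintype ι] {x : ι → ℝ} (hx0 : ∀ i, 0 ≤ x i)
    (hsum : ∑ i, x i = 1) {i ℓ : ι} (hiℓ : i ≠ ℓ) (hle : x i ≤ x ℓ) : x i ≤ 1 / 2 := by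
  classical
  have h := Finset.sum_le_sum_of_subset_of_nonneg (Finset.subset_univ {i, ℓ}) fun t _ _ ↦ hx0 t
  rw [sum_pair hiℓ, hsum] at h
  linarith

theorem charging_lemma_one_fixed_j {n k : ℕ} (f : Set (Fin n) → ℝ)
    (hsub : ∀ A B : Set (Fin n), f A + f B ≥ f (A ∩ B) + f (A ∪ B))
    (x : Fin n → Fin k → ℝ)
    (hx0 : ∀ v i, 0 ≤ x v i) (hxsum : ∀ v, ∑ i, x v i = 1)
    (δ : ℝ) (hδ : δ ∈ Set.Icc (1/2 : ℝ) 1)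
    (j : ℕ) (hj1 : 1 ≤ j) (hjn : j ≤ n)
    (ℓ : Fin k) (hℓ : ∀ i : Fin k, x ⟨j - 1, by omega⟩ i ≤ x ⟨j - 1, by omega⟩ ℓ) :
    ∑ i ∈ Finset.univ.erase ℓ,
        ∫ θ in (0:ℝ)..δ,
          (f {v : Fin n | v.val < j ∧ θ ≤ x v i}
            - f {v : Fin n | v.val < j - 1 ∧ θ ≤ x v i}) ≥
      f {v : Fin n | v.val < j} - f {v : Fin n | v.val < j - 1}
        + x ⟨j - 1, by omega⟩ ℓ *
            (f {v : Fin n | v.val < j - 1} - f {v : Fin n | v.val < j}) := by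
  set w : Fin n := ⟨j - 1, by omega⟩
  set c := f {v : Fin n | v.val < j} - f {v : Fin n | v.val < j - 1}
  have hwS : w ∉ {v : Fin n | v.val < j - 1} := by simp [w]
  have hV : insert w {v : Fin n | v.val < j - 1} = {v : Fin n | v.val < j} := by
    ext v
    simp only [mem_insert_iff, mem_ofPred_eq, Fin.ext_iff, w]
    omega
  have hlabel : ∀ i ∈ univ.erase ℓ, c * x w i ≤ ∫ θ in (0:ℝ)..δ,
      (f {v : Fin n | v.val < j ∧ θ ≤ x v i} - f {v : Fin n | v.val < j - 1 ∧ θ ≤ x v i}) := by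
    intro i hi
    have hhalf := le_half_of_le_of_sum_eq_one (hx0 w) (hxsum w) (ne_of_mem_erase hi) (hℓ i)
    have h := mul_le_integral_marginal_inter_setOf_le hsub hwS (x · i) (hx0 w i)
      (hhalf.trans hδ.1)
    -- `{v | p v} ∩ {v | q v}` is definitionally `{v | p v ∧ q v}`
    rwa [hV] at h
  rw [ge_iff_le]
  calc _ = ∑ i ∈ univ.erase ℓ, c * x w i := by
        rw [← mul_sum, sum_erase_eq_sub (mem_univ ℓ), hxsum]
        ring
    _ ≤ _ := sum_le_sum hlabel
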